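/- Let T be a variety written as a union of irreducible closed subvarieties T_i, and let φ : T → ℝ≥0 be a function such that on each T_i there is a Zariski-open dense subset where φ is lower semicontinuous and constant-in-family positive whenever positive at one point (upper semicontinuity of h⁰ in flat families). Then by Noetherian induction on dim T: inf { φ(t) : t ∈ T, φ(t) > 0 } > 0. -/

import Mathlib

/-!
Noetherian induction on closed subsets: a closed set is a finite union of irreducible closed
sets `C`, and each such `C` splits as `(C ∩ U) ∪ (C \ U)` with `U` the open set supplied by the
hypothesis; there `φ` has a positive lower bound on its positive values, while `C \ U` is a
strictly smaller closed set, handled by induction.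
-/

open TopologicalSpace

namespace TopologicalSpace.NoetherianSpace

variable {T : Type*} [TopologicalSpace T] [NoetherianSpace T]

theorem induction_of_exists_isOpen_inter (p : Set T → Prop) (empty : p ∅)
    (union : ∀ s t, p s → p t → p (s ∪ t))
    (generic : ∀ Z, IsClosed Z → IsIrreducible Z → ∃ U, IsOpen U ∧ (Z ∩ U).Nonempty ∧ p (Z ∩ U))
    {Z : Set T} (hZ : IsClosed Z) : p Z := by
  lift Z to Closeds T using hZ
  induction Z using WellFoundedLT.induction with
  | ind Z IH =>
  obtain ⟨S, hS, hZS⟩ := exists_finset_irreducible Z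
  have hcomponent : ∀ C ∈ S, p C := by
    intro C hCS
    have hCZ : C ≤ Z := hZS ▸ Finset.le_sup (f := id) hCS
    obtain ⟨U, hU, ⟨x, hxC, hxU⟩, hCU⟩ := generic C C.isClosed (hS ⟨C, hCS⟩)
    let W : Closeds T := ⟨C \ U, C.isClosed.sdiff hU⟩
    have hWZ : W < Z := SetLike.lt_iff_le_and_exists.mpr
      ⟨fun y hy => hCZ hy.1, x, hCZ hxC, fun hx => hx.2 hxU⟩
    rw [← Set.inter_union_sdiff (C : Set T) U]
    exact union _ _ hCU (IH W hWZ)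
  rw [hZS]
  refine Finset.sup_induction (p := fun C : Closeds T => p C) (by simpa using empty)
    (fun A hA B hB => ?_) hcomponent
  simpa only [Closeds.coe_sup] using union _ _ hA hB

end TopologicalSpace.NoetherianSpace

def PosValuesBoundedBelowOn {T : Type*} (φ : T → ℝ) (s : Set T) : Prop :=
  ∃ c > 0, ∀ t ∈ s, 0 < φ t → c ≤ φ t

namespace PosValuesBoundedBelowOn

variable {T : Type*} {φ : T → ℝ} {s t : Set T}

theorem empty : PosValuesBoundedBelowOn φ ∅ :=
  ⟨1, one_pos, fun _ h => h.elim⟩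

theorem union (hs : PosValuesBoundedBelowOn φ s) (ht : PosValuesBoundedBelowOn φ t) :
    PosValuesBoundedBelowOn φ (s ∪ t) := by
  obtain ⟨a, ha, has⟩ := hs
  obtain ⟨b, hb, hbt⟩ := ht
  refine ⟨min a b, lt_min ha hb, fun x hx hφ => ?_⟩
  rcases hx with hx | hx
  · exact (min_le_left a b).trans (has x hx hφ)
  · exact (min_le_right a b).trans (hbt x hx hφ)

end PosValuesBoundedBelowOn

theorem stmt14_general {T : Type*} [TopologicalSpace T] [TopologicalSpace.NoetherianSpace T]
    (φ : T → ℝ)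
    (h : ∀ Z : Set T, Z.Nonempty → IsClosed Z → IsIrreducible Z →
      ∃ U : Set T, IsOpen U ∧ (Z ∩ U).Nonempty ∧
        ∃ c > 0, ∀ t ∈ Z ∩ U, 0 < φ t → c ≤ φ t) :
    ∃ c > 0, ∀ t : T, 0 < φ t → c ≤ φ t := by
  obtain ⟨c, hc, hbound⟩ :=
    NoetherianSpace.induction_of_exists_isOpen_inter (PosValuesBoundedBelowOn φ)
      .empty (fun _ _ => .union) (fun Z hZ hirr => h Z hirr.nonempty hZ hirr) isClosed_univ
  exact ⟨c, hc, fun t => hbound t trivial⟩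

/-- Lemma 6.4, abstracted as a Noetherian induction principle. Let `T` be a Noetherian
topological space (e.g. the Chow variety parametrizing the varieties in question) and
`φ : T → ℝ≥0` (e.g. `t ↦ vol(K_{Y_t} + M_t)`). Suppose that on every nonempty closed
irreducible subset `Z ⊆ T` there is an open set `U` meeting `Z` (so `Z ∩ U` is dense in
`Z`) on which `φ` admits a uniform positive lower bound wherever it is positive (the
semicontinuity of `h⁰` in families). Then `inf {φ t : φ t > 0} > 0`. -/
theorem stmt14 {T : Type*} [TopologicalSpace T] [TopologicalSpace.NoetherianSpace T]
    (φ : T → ℝ) (hφ0 : ∀ t, 0 ≤ φ t)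
    (h : ∀ Z : Set T, Z.Nonempty → IsClosed Z → IsIrreducible Z →
      ∃ U : Set T, IsOpen U ∧ (Z ∩ U).Nonempty ∧
        ∃ c > 0, ∀ t ∈ Z ∩ U, 0 < φ t → c ≤ φ t) :
    ∃ c > 0, ∀ t : T, 0 < φ t → c ≤ φ t :=
  stmt14_general φ h
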